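/- arXiv:math-ph/0511088 — 2 statements merged into one kernel-verified Lean document; each statement's English description precedes it below -/
import Mathlib

section
/- (Lemma 3) Let n ≥ 1, γ > 1, ε > 0, and q < -n - 2/(γ-1). Let 𝒱 ⊆ ℝⁿ \ B_ε(0) be measurable and ρ: 𝒱 → [0,∞) measurable with ∫_𝒱 |x|^{q-2} ρ^γ dx < ∞. Then ∫_𝒱 |x|^{q-2} ρ(x)^γ dx ≥ C₁ · (∫_𝒱 |x|^q ρ(x) dx)^γ · ε^{-((q+n)(γ-1)+2)}, where C₁ = (σ_n(1-γ)/((q+n)(γ-1)+2))^{1-γ} and σ_n is the surface measure of the unit sphere in ℝⁿ. -/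
/-!
Write `‖x‖ ^ q * ρ = (‖x‖ ^ ((q - 2) / γ) * ρ) * ‖x‖ ^ (q - (q - 2) / γ)` and apply Hölder's
inequality on `𝒱` with exponents `γ` and `γ / (γ - 1)`. The second factor raised to `γ / (γ - 1)`
is `‖x‖ ^ s` with `s = q + 2 / (γ - 1)`, and the hypothesis on `q` says exactly `s + n < 0`, so in
polar coordinates `∫_{‖x‖ ≥ ε} ‖x‖ ^ s = σₙ ε ^ (s + n) / (-(s + n))`. Raising Hölder's inequality
to the power `γ` gives the bound, and `C₁` is precisely the constant making the `ε`-power and the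
`σₙ`-power of this tail integral cancel.
-/

open MeasureTheory Real Set

section Holder

variable {α : Type*} [MeasurableSpace α] {μ : Measure α}

theorem memLp_ofReal_of_integrable_rpow {f : α → ℝ} {p : ℝ} (hp : 0 < p) (hf : 0 ≤ᵐ[μ] f)
    (hfm : AEStronglyMeasurable f μ) (hfi : Integrable (fun x => f x ^ p) μ) :
    MemLp f (ENNReal.ofReal p) μ := by
  rw [← integrable_norm_rpow_iff hfm (by simpa using hp) ENNReal.ofReal_ne_top,
    ENNReal.toReal_ofReal hp.le]
  refine hfi.congr ?_
  filter_upwards [hf] with x hx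
  rw [Real.norm_of_nonneg hx]

theorem integral_mul_rpow_le_of_nonneg {p : ℝ} (hp : 1 < p) {f g : α → ℝ}
    (hf : 0 ≤ᵐ[μ] f) (hg : 0 ≤ᵐ[μ] g)
    (hfm : AEStronglyMeasurable f μ) (hgm : AEStronglyMeasurable g μ)
    (hfi : Integrable (fun x => f x ^ p) μ) (hgi : Integrable (fun x => g x ^ (p / (p - 1))) μ) :
    (∫ x, f x * g x ∂μ) ^ p ≤
      (∫ x, f x ^ p ∂μ) * (∫ x, g x ^ (p / (p - 1)) ∂μ) ^ (p - 1) := by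
  have hpq : p.HolderConjugate (p / (p - 1)) := .conjExponent hp
  have hF : 0 ≤ ∫ x, f x ^ p ∂μ :=
    integral_nonneg_of_ae (by filter_upwards [hf] with x hx using rpow_nonneg hx p)
  have hG : 0 ≤ ∫ x, g x ^ (p / (p - 1)) ∂μ :=
    integral_nonneg_of_ae (by filter_upwards [hg] with x hx using rpow_nonneg hx _)
  have hFG : 0 ≤ ∫ x, f x * g x ∂μ :=
    integral_nonneg_of_ae (by filter_upwards [hf, hg] with x hfx hgx using mul_nonneg hfx hgx)
  calc (∫ x, f x * g x ∂μ) ^ p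
      ≤ ((∫ x, f x ^ p ∂μ) ^ (1 / p) * (∫ x, g x ^ (p / (p - 1)) ∂μ) ^ (1 / (p / (p - 1)))) ^ p :=
        rpow_le_rpow hFG (integral_mul_le_Lp_mul_Lq_of_nonneg hpq hf hg
          (memLp_ofReal_of_integrable_rpow hpq.pos hf hfm hfi)
          (memLp_ofReal_of_integrable_rpow hpq.symm.pos hg hgm hgi)) hpq.nonneg
    _ = (∫ x, f x ^ p ∂μ) * (∫ x, g x ^ (p / (p - 1)) ∂μ) ^ (p - 1) := by
        rw [mul_rpow (rpow_nonneg hF _) (rpow_nonneg hG _), ← rpow_mul hF, ← rpow_mul hG,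
          one_div_mul_cancel hpq.ne_zero, rpow_one, one_div_div, div_mul_cancel₀ _ hpq.ne_zero]

theorem integral_rpow_mul_le_weighted {w ρ : α → ℝ} {γ q r : ℝ} (hγ : 1 < γ)
    (hw : ∀ᵐ x ∂μ, 0 < w x) (hρ : 0 ≤ᵐ[μ] ρ) (hwm : AEMeasurable w μ) (hρm : AEMeasurable ρ μ)
    (hI : Integrable (fun x => w x ^ r * ρ x ^ γ) μ)
    (hW : Integrable (fun x => w x ^ ((q * γ - r) / (γ - 1))) μ) :
    (∫ x, w x ^ q * ρ x ∂μ) ^ γ ≤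
      (∫ x, w x ^ r * ρ x ^ γ ∂μ) * (∫ x, w x ^ ((q * γ - r) / (γ - 1)) ∂μ) ^ (γ - 1) := by
  have hγ0 : γ ≠ 0 := by positivity
  have hf : ∀ᵐ x ∂μ, (w x ^ (r / γ) * ρ x) ^ γ = w x ^ r * ρ x ^ γ := by
    filter_upwards [hw, hρ] with x hwx hρx
    rw [mul_rpow (rpow_nonneg hwx.le _) hρx, ← rpow_mul hwx.le, div_mul_cancel₀ _ hγ0]
  have hg : ∀ᵐ x ∂μ, (w x ^ (q - r / γ)) ^ (γ / (γ - 1)) = w x ^ ((q * γ - r) / (γ - 1)) := by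
    filter_upwards [hw] with x hwx
    rw [← rpow_mul hwx.le]
    congr 1
    field_simp
  have hfg : ∀ᵐ x ∂μ, w x ^ (r / γ) * ρ x * w x ^ (q - r / γ) = w x ^ q * ρ x := by
    filter_upwards [hw] with x hwx
    rw [mul_right_comm, ← rpow_add hwx, add_sub_cancel]
  have hHolder := integral_mul_rpow_le_of_nonneg hγ (f := fun x => w x ^ (r / γ) * ρ x)
    (g := fun x => w x ^ (q - r / γ))
    (by filter_upwards [hw, hρ] with x hwx hρx using mul_nonneg (rpow_nonneg hwx.le _) hρx)
    (by filter_upwards [hw] with x hwx using rpow_nonneg hwx.le _)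
    ((hwm.pow_const _).mul hρm).aestronglyMeasurable (hwm.pow_const _).aestronglyMeasurable
    (hI.congr (hf.mono fun x hx => hx.symm)) (hW.congr (hg.mono fun x hx => hx.symm))
  rwa [integral_congr_ae hf, integral_congr_ae hg, integral_congr_ae hfg] at hHolder

end Holder

theorem pow_smul_indicator_Ici_rpow_eqOn (ε s : ℝ) {d : ℕ} (hd : 1 ≤ d) :
    EqOn (fun y : ℝ => y ^ (d - 1) • (Ici ε).indicator (· ^ s) y)
      ((Ici ε).indicator (· ^ (s + d - 1))) (Ioi 0) := by
  intro y hy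
  by_cases hyε : ε ≤ y
  · simp only [smul_eq_mul, indicator_of_mem (show y ∈ Ici ε from hyε)]
    rw [← rpow_natCast, Nat.cast_sub hd, ← rpow_add hy]
    ring_nf
  · simp [hyε]

theorem indicator_setOf_le_norm_rpow {E : Type*} [Norm E] (ε s : ℝ) :
    {x : E | ε ≤ ‖x‖}.indicator (fun x => ‖x‖ ^ s) = fun x => (Ici ε).indicator (· ^ s) ‖x‖ := by
  ext x
  simp [indicator_apply]

section Radial

variable {E : Type*} [NormedAddCommGroup E] [NormedSpace ℝ E] [MeasurableSpace E] [BorelSpace E]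
  [FiniteDimensional ℝ E] [Nontrivial E] (μ : Measure E) [μ.IsAddHaarMeasure] {ε s : ℝ}

theorem integrableOn_norm_rpow_setOf_le_norm (hε : 0 < ε) (hs : s + Module.finrank ℝ E < 0) :
    IntegrableOn (fun x => ‖x‖ ^ s) {x : E | ε ≤ ‖x‖} μ := by
  rw [← integrable_indicator_iff (measurableSet_le measurable_const measurable_norm),
    indicator_setOf_le_norm_rpow, integrable_fun_norm_addHaar μ,
    integrableOn_congr_fun (pow_smul_indicator_Ici_rpow_eqOn ε s Module.finrank_pos)
      measurableSet_Ioi]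
  refine (IntegrableOn.integrable_indicator ?_ measurableSet_Ici).integrableOn
  exact (integrableOn_Ici_iff_integrableOn_Ioi).mpr (integrableOn_Ioi_rpow_of_lt (by linarith) hε)

theorem setIntegral_norm_rpow_setOf_le_norm (hε : 0 < ε) (hs : s + Module.finrank ℝ E < 0) :
    ∫ x in {x : E | ε ≤ ‖x‖}, ‖x‖ ^ s ∂μ =
      Module.finrank ℝ E * μ.real (Metric.ball 0 1) *
        (ε ^ (s + Module.finrank ℝ E) / -(s + Module.finrank ℝ E)) := by
  rw [← integral_indicator (measurableSet_le measurable_const measurable_norm),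
    indicator_setOf_le_norm_rpow, integral_fun_norm_addHaar μ,
    setIntegral_congr_fun measurableSet_Ioi
      (pow_smul_indicator_Ici_rpow_eqOn ε s Module.finrank_pos),
    setIntegral_indicator measurableSet_Ici, inter_eq_right.mpr (Ici_subset_Ioi.mpr hε),
    integral_Ici_eq_integral_Ioi, integral_Ioi_rpow_of_lt (by linarith) hε, nsmul_eq_mul,
    smul_eq_mul, sub_add_cancel, div_neg, neg_div, mul_assoc]

theorem setIntegral_norm_rpow_mul_rpow_le {V : Set E} (hV : MeasurableSet V)
    (hVε : ∀ x ∈ V, ε ≤ ‖x‖) (hε : 0 < ε) {ρ : E → ℝ} (hρ : AEMeasurable ρ (μ.restrict V))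
    (hρ0 : ∀ x ∈ V, 0 ≤ ρ x) {γ q r : ℝ} (hγ : 1 < γ)
    (hs : (q * γ - r) / (γ - 1) + Module.finrank ℝ E < 0)
    (hI : IntegrableOn (fun x => ‖x‖ ^ r * ρ x ^ γ) V μ) :
    (∫ x in V, ‖x‖ ^ q * ρ x ∂μ) ^ γ ≤ (∫ x in V, ‖x‖ ^ r * ρ x ^ γ ∂μ) *
      (Module.finrank ℝ E * μ.real (Metric.ball 0 1) *
        (ε ^ ((q * γ - r) / (γ - 1) + Module.finrank ℝ E) /
          -((q * γ - r) / (γ - 1) + Module.finrank ℝ E))) ^ (γ - 1) := by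
  have htail := integrableOn_norm_rpow_setOf_le_norm μ hε hs
  refine (integral_rpow_mul_le_weighted hγ
    (ae_restrict_of_forall_mem hV fun x hx => hε.trans_le (hVε x hx))
    (ae_restrict_of_forall_mem hV hρ0) measurable_norm.aemeasurable hρ hI
    (htail.mono_set hVε)).trans (mul_le_mul_of_nonneg_left ?_
      (setIntegral_nonneg hV fun x hx => mul_nonneg (by positivity) (rpow_nonneg (hρ0 x hx) γ)))
  rw [← setIntegral_norm_rpow_setOf_le_norm μ hε hs]
  exact rpow_le_rpow (setIntegral_nonneg hV fun x _ => by positivity)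
    (setIntegral_mono_set htail (.of_forall fun x => rpow_nonneg (norm_nonneg x) _)
      (.of_forall hVε)) (by linarith)

end Radial

theorem tail_constant_rpow_mul_rpow_eq_one {σ γ ε A : ℝ} (hσ : 0 < σ) (hγ : 1 < γ) (hε : 0 < ε)
    (hA : A < 0) :
    (σ * (1 - γ) / A) ^ (1 - γ) * (σ * (ε ^ (A / (γ - 1)) / -(A / (γ - 1)))) ^ (γ - 1) *
      ε ^ (-A) = 1 := by
  have hγ1 : 0 < γ - 1 := by linarith
  have hc : 0 < σ * (1 - γ) / A := div_pos_of_neg_of_neg (by nlinarith) hA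
  have htail : σ * (ε ^ (A / (γ - 1)) / -(A / (γ - 1))) = σ * (1 - γ) / A * ε ^ (A / (γ - 1)) := by
    field_simp
    ring
  set c := σ * (1 - γ) / A
  rw [htail, mul_rpow hc.le (by positivity), ← rpow_mul hε.le, div_mul_cancel₀ _ hγ1.ne',
    show 1 - γ = -(γ - 1) by ring, rpow_neg hc.le, rpow_neg hε.le]
  field_simp

/-- Lemma 3: for q < -n - 2/(γ-1) and 𝒱 outside B_ε(0),
∫_𝒱 |x|^{q-2} ρ^γ dx ≥ C₁ (∫_𝒱 |x|^q ρ dx)^γ ε^{-((q+n)(γ-1)+2)},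
with C₁ = (σ_n(1-γ)/((q+n)(γ-1)+2))^{1-γ}. -/
theorem stmt3 (n : ℕ) (hn : 1 ≤ n) (γ : ℝ) (hγ : 1 < γ) (ε : ℝ) (hε : 0 < ε)
    (q : ℝ) (hq : q < -(n : ℝ) - 2 / (γ - 1))
    (𝒱 : Set (EuclideanSpace ℝ (Fin n))) (hmeas : MeasurableSet 𝒱)
    (hout : ∀ x ∈ 𝒱, ε ≤ ‖x‖)
    (ρ : EuclideanSpace ℝ (Fin n) → ℝ) (hρ : Measurable ρ) (hρ0 : ∀ x, 0 ≤ ρ x)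
    (hfin : IntegrableOn (fun x => ‖x‖ ^ (q - 2) * ρ x ^ γ) 𝒱 volume) :
    let σn : ℝ := n * (volume (Metric.ball (0 : EuclideanSpace ℝ (Fin n)) 1)).toReal
    let C₁ : ℝ := (σn * (1 - γ) / ((q + n) * (γ - 1) + 2)) ^ (1 - γ)
    ∫ x in 𝒱, ‖x‖ ^ (q - 2) * ρ x ^ γ ≥
      C₁ * (∫ x in 𝒱, ‖x‖ ^ q * ρ x) ^ γ * ε ^ (-((q + n) * (γ - 1) + 2)) := by
  intro σn C₁
  have : NeZero n := ⟨by omega⟩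
  have hγ1 : 0 < γ - 1 := by linarith
  set A := (q + n) * (γ - 1) + 2 with hA_def
  have hA : A < 0 := by
    have := mul_lt_mul_of_pos_right hq hγ1
    rw [sub_mul, div_mul_cancel₀ _ hγ1.ne'] at this
    linarith
  have hsn : (q * γ - (q - 2)) / (γ - 1) + n = A / (γ - 1) := by
    rw [hA_def]; field_simp; ring
  have hσ : 0 < σn := mul_pos (by exact_mod_cast hn)
    (ENNReal.toReal_pos (Metric.measure_ball_pos volume 0 one_pos).ne' measure_ball_lt_top.ne)
  have hHolder := setIntegral_norm_rpow_mul_rpow_le volume hmeas hout hε hρ.aemeasurable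
    (fun x _ => hρ0 x) (q := q) hγ (by simpa [hsn] using div_neg_of_neg_of_pos hA hγ1) hfin
  simp only [finrank_euclideanSpace_fin, measureReal_def, hsn] at hHolder
  have hC₁ : 0 ≤ C₁ := rpow_nonneg (div_nonneg_of_nonpos (by nlinarith) hA.le) _
  calc C₁ * (∫ x in 𝒱, ‖x‖ ^ q * ρ x) ^ γ * ε ^ (-A)
      ≤ C₁ * ((∫ x in 𝒱, ‖x‖ ^ (q - 2) * ρ x ^ γ) * (σn * (ε ^ (A / (γ - 1)) / -(A / (γ - 1))))
          ^ (γ - 1)) * ε ^ (-A) := by gcongr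
    _ = (∫ x in 𝒱, ‖x‖ ^ (q - 2) * ρ x ^ γ) *
          (C₁ * (σn * (ε ^ (A / (γ - 1)) / -(A / (γ - 1)))) ^ (γ - 1) * ε ^ (-A)) := by ring
    _ = ∫ x in 𝒱, ‖x‖ ^ (q - 2) * ρ x ^ γ := by
        rw [tail_constant_rpow_mul_rpow_eq_one hσ hγ hε hA, mul_one]
end

section
/- (Riccati comparison, positive-discriminant case) Let a > 0, b > 0, T > 0, and let F: [0, T) → ℝ be differentiable with F'(t) ≥ a(F(t)² − b²) for all t ∈ [0,T). If F(0) > b·coth(a b T), then there exists t₁ ∈ (0, T) such that F(t) → +∞ as t → t₁⁻ (equivalently, F cannot be extended to a finite-valued differentiable function on all of [0,T) satisfying the inequality); more precisely, F(t) ≥ b(1 + K e^{2abt})/(1 − K e^{2abt}) wherever defined, with K = (F(0)−b)/(F(0)+b) ∈ (0,1), and the blow-up time is ≤ (1/(2ab)) ln(1/K) < T. -/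
/-!
Since `F 0 > b`, the level `F 0` can never be crossed downwards (the inequality forces `F' > 0`
there), so `F ≥ F 0 > b` on `[0, T]`. Along such an `F` the quantity
`(F - b) / (F + b) · e^{-2abt}` is nondecreasing, because its derivative is
`2b e^{-2abt} (F' - a (F² - b²)) / (F + b)²`. Its value at `0` is `K = (F 0 - b) / (F 0 + b)` and
its value at `T` is less than `e^{-2abT}`, whereas `F 0 > b coth (abT)` means exactly
`K > e^{-2abT}`.
-/

open Real Set

theorem le_image_of_comp_le_deriv {F F' g : ℝ → ℝ} {T c : ℝ}
    (hderiv : ∀ t ∈ Icc 0 T, HasDerivAt F (F' t) t)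
    (hineq : ∀ t ∈ Ico 0 T, g (F t) ≤ F' t) (hc : 0 < g c) (h0 : c ≤ F 0) :
    ∀ t ∈ Icc 0 T, c ≤ F t :=
  image_le_of_deriv_right_lt_deriv_boundary' continuousOn_const
    (fun _ _ => hasDerivWithinAt_const _ _ c) h0
    (fun t ht => (hderiv t ht).continuousAt.continuousWithinAt)
    (fun t ht => (hderiv t (Ico_subset_Icc_self ht)).hasDerivWithinAt)
    (fun t ht hFt => (hFt ▸ hc).trans_le (hineq t ht))

theorem monotoneOn_riccati_ratio {F F' : ℝ → ℝ} {a b T : ℝ} (hb : 0 ≤ b)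
    (hderiv : ∀ t ∈ Icc 0 T, HasDerivAt F (F' t) t)
    (hineq : ∀ t ∈ Ioo 0 T, a * (F t ^ 2 - b ^ 2) ≤ F' t)
    (hpos : ∀ t ∈ Icc 0 T, 0 < F t + b) :
    MonotoneOn (fun t => (F t - b) / (F t + b) * exp (-(2 * a * b * t))) (Icc 0 T) := by
  have hH : ∀ t ∈ Icc 0 T, HasDerivAt (fun t => (F t - b) / (F t + b) * exp (-(2 * a * b * t)))
      (2 * b * exp (-(2 * a * b * t)) / (F t + b) ^ 2 * (F' t - a * (F t ^ 2 - b ^ 2))) t := by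
    intro t ht
    have hexp : HasDerivAt (fun t => exp (-(2 * a * b * t)))
        (exp (-(2 * a * b * t)) * -(2 * a * b)) t := by
      simpa using ((hasDerivAt_id t).const_mul (2 * a * b)).neg.exp
    have hratio : HasDerivAt (fun t => (F t - b) / (F t + b))
        ((F' t * (F t + b) - (F t - b) * F' t) / (F t + b) ^ 2) t :=
      ((hderiv t ht).sub_const b).div ((hderiv t ht).add_const b) (hpos t ht).ne'
    refine (hratio.mul hexp).congr_deriv ?_
    field_simp
    ring
  refine monotoneOn_of_hasDerivWithinAt_nonneg (convex_Icc 0 T)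
    (fun t ht => (hH t ht).continuousAt.continuousWithinAt)
    (fun t ht => (hH t (interior_subset ht)).hasDerivWithinAt) (fun t ht => ?_)
  rw [interior_Icc] at ht
  exact mul_nonneg (by positivity) (sub_nonneg.2 (hineq t ht))

theorem exp_neg_two_mul_lt_div_of_mul_coth_lt {x b y : ℝ} (hx : 0 < x) (hb : 0 < b)
    (hy : b * (cosh x / sinh x) < y) : exp (-(2 * x)) < (y - b) / (y + b) := by
  have hs := sinh_pos_iff.2 hx
  have hys : b * cosh x < y * sinh x := by rwa [← mul_div_assoc, div_lt_iff₀ hs] at hy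
  have hcs : exp (-(2 * x)) * (cosh x + sinh x) = cosh x - sinh x := by
    rw [cosh_add_sinh, cosh_sub_sinh, ← exp_add]
    ring_nf
  have hy0 : 0 < y := by nlinarith [cosh_pos x]
  rw [lt_div_iff₀ (by linarith)]
  nlinarith [sinh_lt_cosh x]

/-- Riccati comparison, positive discriminant: no differentiable F on [0,T]
with F' ≥ a(F² − b²) can satisfy F(0) > b·coth(abT). -/
theorem stmt8 (a b T : ℝ) (ha : 0 < a) (hb : 0 < b) (hT : 0 < T)
    (F F' : ℝ → ℝ)
    (hderiv : ∀ t ∈ Icc (0 : ℝ) T, HasDerivAt F (F' t) t)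
    (hineq : ∀ t ∈ Icc (0 : ℝ) T, a * (F t ^ 2 - b ^ 2) ≤ F' t)
    (h0 : F 0 > b * (Real.cosh (a * b * T) / Real.sinh (a * b * T))) :
    False := by
  have habT : 0 < a * b * T := by positivity
  have hF0 : b < F 0 := by
    have hcoth : 1 < cosh (a * b * T) / sinh (a * b * T) :=
      (one_lt_div (sinh_pos_iff.2 habT)).2 (sinh_lt_cosh _)
    exact (lt_mul_of_one_lt_right hb hcoth).trans h0
  have hbound : ∀ t ∈ Icc 0 T, F 0 ≤ F t :=
    le_image_of_comp_le_deriv (g := fun y => a * (y ^ 2 - b ^ 2)) hderiv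
      (fun t ht => hineq t (Ico_subset_Icc_self ht)) (mul_pos ha (by nlinarith)) le_rfl
  have hmono := monotoneOn_riccati_ratio hb.le hderiv
    (fun t ht => hineq t (Ioo_subset_Icc_self ht)) (fun t ht => by linarith [hbound t ht])
  have hK := hmono (left_mem_Icc.2 hT.le) (right_mem_Icc.2 hT.le) hT.le
  have hratioT : (F T - b) / (F T + b) < 1 := by
    have := hbound T (right_mem_Icc.2 hT.le)
    rw [div_lt_one (by linarith)]
    linarith
  refine lt_irrefl (exp (-(2 * a * b * T))) ?_
  calc exp (-(2 * a * b * T)) < (F 0 - b) / (F 0 + b) := by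
        simpa only [mul_assoc] using exp_neg_two_mul_lt_div_of_mul_coth_lt habT hb h0
    _ ≤ (F T - b) / (F T + b) * exp (-(2 * a * b * T)) := by simpa using hK
    _ < exp (-(2 * a * b * T)) := mul_lt_of_lt_one_left (exp_pos _) hratioT
end
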